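/- arXiv:2504.01107 — 3 statements merged into one kernel-verified Lean document; each statement's English description precedes it below -/
import Mathlib

section
/- For permutations π, σ of a finite set of size n, one has π ≤ σ if and only if |π| + |π⁻¹σ| = |σ|, where |τ| = n − #(τ) and #(τ) is the number of cycles of τ (including fixed points). -/
/-!
Write `#τ` for the number of cycles of `τ` and `π ∨ γ` for the join of the cycle partitions.
The key fact is `#π + #(π⁻¹γ) + #γ ≤ n + 2 #(π ∨ γ)`, proved by induction on `n - #π`: writing
`π = π' * (a b)` with `b = π a`, the permutation `π'` has one more cycle than `π`. Passing from
`π` to `π'` changes `#(π⁻¹γ)` by one and raises `#(π ∨ γ)` by at most one; when `#(π⁻¹γ)` drops,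
`a` and `b` share a cycle of `π'⁻¹γ`, hence a block of `π' ∨ γ`, so `#(π ∨ γ)` does not grow.

Since `#(π ∨ γ) ≤ #γ`, this gives `|γ| ≤ |π| + |π⁻¹γ|`, and equality forces `π ∨ γ` to be the
cycle partition of `γ`, i.e. every cycle of `π` lies in a cycle of `γ`. Then `#π`, `#(π⁻¹γ)` and
`n` split as sums over the cycles `C` of `γ`, each summand obeys the same inequality with
`#(γ|_C) = 1`, and so the global equality holds iff it holds on every cycle of `γ`.
-/

open Equiv

namespace ThirdOrderFree

variable {α : Type*}

/-- The setoid whose classes are the cycles (orbits) of a permutation. -/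
def sameCycleSetoid (σ : Perm α) : Setoid α :=
  ⟨σ.SameCycle,
    ⟨fun x => Equiv.Perm.SameCycle.refl σ x, fun h => h.symm, fun h h' => h.trans h'⟩⟩

/-- Number of cycles (orbits, including fixed points) of a permutation. -/
noncomputable def numCycles (σ : Perm α) : ℕ :=
  Nat.card (Quotient (sameCycleSetoid σ))

/-- The length `|σ| = n - #(σ)`. -/
noncomputable def len (σ : Perm α) : ℕ :=
  Nat.card α - numCycles σ

/-- Join of the cycle partitions of two permutations. -/
def joinSetoid (π σ : Perm α) : Setoid α :=
  sameCycleSetoid π ⊔ sameCycleSetoid σ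

/-- Number of blocks of `π ∨ σ`. -/
noncomputable def numBlocks (π σ : Perm α) : ℕ :=
  Nat.card (Quotient (joinSetoid π σ))

/-- `π ∨ σ` is the one-block partition. -/
def JoinTop (π σ : Perm α) : Prop :=
  ∀ x y : α, (joinSetoid π σ).r x y

/-- `π` is a non-crossing (annular) permutation with respect to `γ`. -/
def SNC (γ π : Perm α) : Prop :=
  JoinTop π γ ∧
    numCycles π + numCycles (π⁻¹ * γ) + numCycles γ = Nat.card α + 2

/-- `τ` separates the points of `N`: no cycle of `τ` contains two distinct points of `N`. -/
def Separates (τ : Perm α) (N : Set α) : Prop :=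
  ∀ x ∈ N, ∀ y ∈ N, τ.SameCycle x y → x = y

/-- The first-return map of `σ` on the set `{x | p x}`. -/
noncomputable def firstReturn (σ : Perm α) (p : α → Prop) (x : α) : α :=
  (σ ^ sInf {k : ℕ | 0 < k ∧ p ((σ ^ k) x)}) x

open Classical in
/-- The restriction of `σ` to `{x | p x}`: the unique permutation agreeing with the
first-return map (it exists whenever `α` is finite). -/
noncomputable def restrictPerm (σ : Perm α) (p : α → Prop) : Perm {x // p x} :=
  if h : ∃ e : Perm {x // p x}, ∀ x : {x // p x}, (e x : α) = firstReturn σ p (x : α)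
  then h.choose else 1

/-- `π ≤ σ` : each cycle of `π` is contained in a cycle of `σ` and on each cycle of
`σ` the restriction of `π` is a non-crossing permutation of that cycle. -/
def le' (π σ : Perm α) : Prop :=
  (∀ x y : α, π.SameCycle x y → σ.SameCycle x y) ∧
  ∀ x : α,
    numCycles (restrictPerm π (σ.SameCycle x)) +
      numCycles ((restrictPerm π (σ.SameCycle x))⁻¹ * restrictPerm σ (σ.SameCycle x)) =
      Nat.card {y // σ.SameCycle x y} + 1

/-- `π ≲ σ` : on each block of `π ∨ σ`, `π` is annular non-crossing w.r.t. `σ`. -/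
def ncRel (π σ : Perm α) : Prop :=
  ∀ x : α,
    SNC (restrictPerm σ ((joinSetoid π σ).r x)) (restrictPerm π ((joinSetoid π σ).r x))

/-- The permutation of `Σ i, Fin (n i)` rotating each block: the product of the
directed cycles `T i` of lengths `n i`. -/
def blockRotate {ι : Type*} (n : ι → ℕ) : Perm ((i : ι) × Fin (n i)) :=
  Equiv.sigmaCongrRight fun i => finRotate (n i)

/-- The first elements of the blocks. -/
def zeroSection {ι : Type*} (n : ι → ℕ) (hn : ∀ i, 0 < n i) :
    ι ≃ {x : (i : ι) × Fin (n i) // x.2.val = 0} where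
  toFun i := ⟨⟨i, ⟨0, hn i⟩⟩, rfl⟩
  invFun x := x.1.1
  left_inv i := rfl
  right_inv := fun x => by
    obtain ⟨⟨i, j⟩, hj⟩ := x
    exact Subtype.ext (congrArg (Sigma.mk i) (Fin.ext hj.symm))

/-- `π_{\vec n}` : merge the blocks `T i` along the cycles of `π`; within a block it
moves forward, and the last element of block `i` is sent to the first element of
block `π i`. -/
def mergePerm {ι : Type*} (n : ι → ℕ) (hn : ∀ i, 0 < n i) (π : Perm ι) :
    Perm ((i : ι) × Fin (n i)) :=
  (π.extendDomain (zeroSection n hn)) * blockRotate n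

section Quotient

variable {s t : Setoid α}

theorem card_quotient_le_of_le [Finite α] (h : s ≤ t) :
    Nat.card (Quotient t) ≤ Nat.card (Quotient s) :=
  Nat.card_le_card_of_surjective (Setoid.map_of_le h) fun q =>
    q.inductionOn fun x => ⟨Quotient.mk s x, rfl⟩

theorem le_of_le_of_card_quotient_eq [Finite α] (h : s ≤ t)
    (hc : Nat.card (Quotient t) = Nat.card (Quotient s)) : t ≤ s := by
  have hinj : Function.Injective (Setoid.map_of_le h) :=
    ((Nat.bijective_iff_surjective_and_card _).2
      ⟨fun q => q.inductionOn fun x => ⟨Quotient.mk s x, rfl⟩, hc.symm⟩).1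
  exact fun x y hxy => Quotient.exact (hinj (Quotient.sound hxy : Quotient.mk t x = _))

theorem card_quotient_lt_of_le [Finite α] (h : s ≤ t) {a b : α} (hs : ¬ s a b) (ht : t a b) :
    Nat.card (Quotient t) < Nat.card (Quotient s) :=
  (card_quotient_le_of_le h).lt_of_ne fun hc => hs (le_of_le_of_card_quotient_eq h hc ht)

def mergeSetoid (s : Setoid α) (a b : α) : Setoid α where
  r x y := s x y ∨ (s x a ∧ s b y) ∨ (s x b ∧ s a y)
  iseqv := by
    refine ⟨fun x => Or.inl (s.refl' x), ?_, ?_⟩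
    · rintro x y (h | ⟨h₁, h₂⟩ | ⟨h₁, h₂⟩)
      · exact Or.inl (s.symm' h)
      · exact Or.inr (Or.inr ⟨s.symm' h₂, s.symm' h₁⟩)
      · exact Or.inr (Or.inl ⟨s.symm' h₂, s.symm' h₁⟩)
    · rintro x y z (h | ⟨h₁, h₂⟩ | ⟨h₁, h₂⟩) (h' | ⟨h₁', h₂'⟩ | ⟨h₁', h₂'⟩)
      · exact Or.inl (s.trans' h h')
      · exact Or.inr (Or.inl ⟨s.trans' h h₁', h₂'⟩)
      · exact Or.inr (Or.inr ⟨s.trans' h h₁', h₂'⟩)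
      · exact Or.inr (Or.inl ⟨h₁, s.trans' h₂ h'⟩)
      · exact Or.inl (s.trans' h₁ (s.trans' (s.symm' (s.trans' h₂ h₁')) h₂'))
      · exact Or.inl (s.trans' h₁ h₂')
      · exact Or.inr (Or.inr ⟨h₁, s.trans' h₂ h'⟩)
      · exact Or.inl (s.trans' h₁ h₂')
      · exact Or.inl (s.trans' h₁ (s.trans' (s.symm' (s.trans' h₂ h₁')) h₂'))

theorem le_mergeSetoid (s : Setoid α) (a b : α) : s ≤ mergeSetoid s a b :=
  fun _ _ => Or.inl

theorem mergeSetoid_le {a b : α} (hab : s a b) : mergeSetoid s a b ≤ s := by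
  rintro x y (h | ⟨h₁, h₂⟩ | ⟨h₁, h₂⟩)
  · exact h
  · exact s.trans' (s.trans' h₁ hab) h₂
  · exact s.trans' (s.trans' h₁ (s.symm' hab)) h₂

open Classical in
theorem card_quotient_le_card_mergeSetoid_add_one [Finite α] (s : Setoid α) (a b : α) :
    Nat.card (Quotient s) ≤ Nat.card (Quotient (mergeSetoid s a b)) + 1 := by
  -- Collapse the class of `b` to `none`; elsewhere merging `a` and `b` identifies nothing.
  let f : Quotient s → Option (Quotient (mergeSetoid s a b)) :=
    Quotient.lift (fun x => if s x b then none else some (Quotient.mk _ x)) fun x y hxy => by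
      by_cases hx : s x b
      · rw [if_pos hx, if_pos (s.trans' (s.symm' hxy) hx)]
      · rw [if_neg hx, if_neg fun hy => hx (s.trans' hxy hy), Quotient.sound (Or.inl hxy)]
  have hf : Function.Injective f := by
    rintro ⟨x⟩ ⟨y⟩ hxy
    change (if s x b then none else some _) = (if s y b then none else some _) at hxy
    apply Quotient.sound
    split_ifs at hxy with hx hy hy
    · exact s.trans' hx (s.symm' hy)
    · obtain h | ⟨-, h⟩ | ⟨h, -⟩ := Quotient.exact (Option.some.inj hxy)
      · exact h
      · exact absurd (s.symm' h) hy
      · exact absurd h hx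
  simpa [Finite.card_option] using Nat.card_le_card_of_injective f hf

end Quotient

section Cycles

theorem sameCycleSetoid_le_of_forall_rel (f : Perm α) {s : Setoid α} (h : ∀ z, s z (f z)) :
    sameCycleSetoid f ≤ s := by
  rintro x _ ⟨i, rfl⟩
  induction i using Int.induction_on with
  | zero => exact s.refl' x
  | succ i ih => rw [add_comm, zpow_add, zpow_one, Perm.mul_apply]; exact s.trans' ih (h _)
  | pred i ih =>
    rw [sub_eq_neg_add, zpow_add, zpow_neg_one, Perm.mul_apply]
    exact s.trans' ih (s.symm' (by simpa using h (f⁻¹ ((f ^ (-(i : ℤ))) x))))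

theorem sameCycleSetoid_inv (f : Perm α) : sameCycleSetoid f⁻¹ = sameCycleSetoid f :=
  Setoid.ext fun _ _ => Perm.sameCycle_inv

theorem numCycles_inv (f : Perm α) : numCycles f⁻¹ = numCycles f := by
  rw [numCycles, sameCycleSetoid_inv, numCycles]

theorem numCycles_one : numCycles (1 : Perm α) = Nat.card α :=
  (Nat.card_eq_of_bijective (Quotient.mk _)
    ⟨fun _ _ h => Perm.sameCycle_one.1 (Quotient.exact h), Quotient.mk_surjective⟩).symm

theorem numCycles_le_card [Finite α] (f : Perm α) : numCycles f ≤ Nat.card α :=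
  Nat.card_le_card_of_surjective _ Quotient.mk_surjective

theorem numCycles_eq_one {f : Perm α} [Nonempty α] (h : ∀ x y, f.SameCycle x y) :
    numCycles f = 1 :=
  Nat.card_eq_one_iff_unique.2
    ⟨⟨fun u v => Quotient.inductionOn₂ u v fun x y => Quotient.sound (h x y)⟩,
      ⟨Quotient.mk _ (Classical.arbitrary α)⟩⟩

theorem sameCycle_iff_exists_pow_lt [Finite α] {f : Perm α} {x y : α} {k : ℕ} (hk : 0 < k)
    (hx : (f ^ k) x = x) : f.SameCycle x y ↔ ∃ j < k, (f ^ j) x = y := by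
  refine ⟨fun h => ?_, fun ⟨j, _, hj⟩ => ⟨j, by rw [zpow_natCast, hj]⟩⟩
  obtain ⟨i, rfl⟩ := h.exists_nat_pow_eq
  refine ⟨i % k, Nat.mod_lt i hk, ?_⟩
  conv_rhs => rw [← Nat.mod_add_div i k]
  rw [pow_add, Perm.mul_apply, pow_mul, Perm.pow_apply_eq_self_of_apply_eq_self hx]

end Cycles

section Swap

variable [DecidableEq α]

theorem sameCycleSetoid_mul_swap_le {ξ : Perm α} {s : Setoid α} (h : sameCycleSetoid ξ ≤ s)
    (a b : α) : sameCycleSetoid (ξ * swap a b) ≤ mergeSetoid s a b := by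
  refine sameCycleSetoid_le_of_forall_rel _ fun z => ?_
  have hstep : ∀ y, s y (ξ y) := fun y => h (Perm.SameCycle.refl ξ y).apply_right
  rcases eq_or_ne z a with rfl | hza
  · exact Or.inr (Or.inl ⟨s.refl' z, by simpa using hstep b⟩)
  rcases eq_or_ne z b with rfl | hzb
  · exact Or.inr (Or.inr ⟨s.refl' z, by simpa using hstep a⟩)
  · exact Or.inl (by simpa [swap_apply_of_ne_of_ne hza hzb] using hstep z)

theorem sameCycle_mul_swap_iff [Finite α] {ζ : Perm α} {a b : α} (hab : a ≠ b) :
    (ζ * swap a b).SameCycle a b ↔ ¬ ζ.SameCycle a b := by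
  classical
  -- `k` is the first time the `ζ`-orbit of `b` returns to `{a, b}`; up to that time the
  -- `ζ * swap a b`-orbit of `a` follows it.
  have hex : ∃ k, 0 < k ∧ ((ζ ^ k) b = a ∨ (ζ ^ k) b = b) :=
    ⟨orderOf ζ, orderOf_pos ζ, Or.inr (by rw [pow_orderOf_eq_one]; rfl)⟩
  obtain ⟨hk, hkab⟩ := Nat.find_spec hex
  have hmin : ∀ j, 0 < j → j < Nat.find hex → (ζ ^ j) b ≠ a ∧ (ζ ^ j) b ≠ b :=
    fun j hj hjk => not_or.1 fun h => Nat.find_min hex hjk ⟨hj, h⟩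
  have htraj : ∀ j, 0 < j → j ≤ Nat.find hex → ((ζ * swap a b) ^ j) a = (ζ ^ j) b := by
    intro j hj hjk
    induction j with
    | zero => omega
    | succ j ih =>
      rcases Nat.eq_zero_or_pos j with rfl | hj'
      · simp
      obtain ⟨hja, hjb⟩ := hmin j hj' (by omega)
      rw [pow_succ', Perm.mul_apply, ih hj' (by omega), Perm.mul_apply,
        swap_apply_of_ne_of_ne hja hjb, pow_succ', Perm.mul_apply]
  rcases hkab with hka | hkb
  · have hζ : ζ.SameCycle a b := (show ζ.SameCycle b a from ⟨_, by rw [zpow_natCast, hka]⟩).symm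
    rw [iff_false_intro (not_not_intro hζ), iff_false,
      sameCycle_iff_exists_pow_lt hk (by rw [htraj _ hk le_rfl, hka])]
    rintro ⟨j, hjk, hj⟩
    rcases Nat.eq_zero_or_pos j with rfl | hj0
    · exact hab hj
    · exact (hmin j hj0 hjk).2 (htraj j hj0 hjk.le ▸ hj)
  · rw [iff_true_intro (show (ζ * swap a b).SameCycle a b from
      ⟨_, by rw [zpow_natCast, htraj _ hk le_rfl, hkb]⟩), true_iff]
    intro hζ
    obtain ⟨j, hjk, hj⟩ := (sameCycle_iff_exists_pow_lt hk hkb).1 hζ.symm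
    rcases Nat.eq_zero_or_pos j with rfl | hj0
    · exact hab hj.symm
    · exact (hmin j hj0 hjk).1 hj

variable [Finite α]

theorem numCycles_add_one_le_mul_swap {ζ : Perm α} {a b : α} (hab : a ≠ b)
    (h : ζ.SameCycle a b) : numCycles ζ + 1 ≤ numCycles (ζ * swap a b) :=
  card_quotient_lt_of_le ((sameCycleSetoid_mul_swap_le le_rfl a b).trans (mergeSetoid_le h))
    (fun h' => (sameCycle_mul_swap_iff hab).1 h' h) h

theorem numCycles_le_mul_swap_add_one (ζ : Perm α) (a b : α) :
    numCycles ζ ≤ numCycles (ζ * swap a b) + 1 :=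
  (card_quotient_le_card_mergeSetoid_add_one _ a b).trans
    (Nat.add_le_add_right (card_quotient_le_of_le (sameCycleSetoid_mul_swap_le le_rfl a b)) 1)

end Swap

section Join

theorem joinSetoid_one (γ : Perm α) : joinSetoid 1 γ = sameCycleSetoid γ :=
  le_antisymm (sup_le (fun x _ h => Perm.sameCycle_one.1 h ▸ (sameCycleSetoid γ).refl' x) le_rfl)
    le_sup_right

theorem numBlocks_one (γ : Perm α) : numBlocks 1 γ = numCycles γ := by
  rw [numBlocks, joinSetoid_one, numCycles]

theorem sameCycleSetoid_inv_mul_le_joinSetoid (ξ γ : Perm α) :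
    sameCycleSetoid (γ⁻¹ * ξ) ≤ joinSetoid ξ γ :=
  sameCycleSetoid_le_of_forall_rel _ fun z => (joinSetoid ξ γ).trans'
    (le_sup_left (a := sameCycleSetoid ξ) (Perm.SameCycle.refl ξ z).apply_right)
    (le_sup_right (a := sameCycleSetoid ξ) (Perm.SameCycle.refl γ (ξ z)).symm_apply_right)

theorem numBlocks_le_numCycles [Finite α] (π γ : Perm α) : numBlocks π γ ≤ numCycles γ :=
  card_quotient_le_of_le le_sup_right

variable [DecidableEq α]

theorem joinSetoid_mul_swap_le (ξ γ : Perm α) (a b : α) :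
    joinSetoid (ξ * swap a b) γ ≤ mergeSetoid (joinSetoid ξ γ) a b :=
  sup_le (sameCycleSetoid_mul_swap_le le_sup_left a b) (le_sup_right.trans (le_mergeSetoid _ a b))

variable [Finite α]

theorem numBlocks_le_mul_swap_add_one (ξ γ : Perm α) (a b : α) :
    numBlocks ξ γ ≤ numBlocks (ξ * swap a b) γ + 1 :=
  (card_quotient_le_card_mergeSetoid_add_one _ a b).trans
    (Nat.add_le_add_right (card_quotient_le_of_le (joinSetoid_mul_swap_le ξ γ a b)) 1)

theorem numBlocks_le_mul_swap {ξ γ : Perm α} {a b : α} (h : joinSetoid ξ γ a b) :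
    numBlocks ξ γ ≤ numBlocks (ξ * swap a b) γ :=
  card_quotient_le_of_le ((joinSetoid_mul_swap_le ξ γ a b).trans (mergeSetoid_le h))

end Join

section Genus

variable [Finite α]

theorem numCycles_add_numCycles_add_numCycles_le (π γ : Perm α) :
    numCycles π + numCycles (π⁻¹ * γ) + numCycles γ ≤ Nat.card α + 2 * numBlocks π γ := by
  classical
  induction hN : Nat.card α - numCycles π using Nat.strong_induction_on generalizing π with
  | _ N ih =>
    by_cases hπ : π = 1
    · subst hπ
      rw [numCycles_one, inv_one, one_mul, numBlocks_one]
      omega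
    obtain ⟨a, ha⟩ : ∃ a, π a ≠ a := by simpa [Perm.ext_iff] using hπ
    -- `π'` fixes `π a`, so it splits the cycle of `π` through `a` in two.
    set b := π a
    set π' := π * swap a b
    have hπ'π : π' * swap a b = π := by rw [mul_assoc, swap_mul_self, mul_one]
    have hinv : ∀ ξ : Perm α, numCycles (ξ⁻¹ * γ) = numCycles (γ⁻¹ * ξ) := fun ξ => by
      rw [← numCycles_inv, mul_inv_rev, inv_inv]
    have hsplit : numCycles π + 1 ≤ numCycles π' :=
      numCycles_add_one_le_mul_swap (Ne.symm ha) (Perm.SameCycle.refl π a).apply_right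
    have hblocks : numBlocks π' γ ≤ numBlocks π γ + 1 :=
      hπ'π ▸ numBlocks_le_mul_swap_add_one π' γ a b
    have IH := ih _ (by have := numCycles_le_card π'; omega) π' rfl
    have hζ : γ⁻¹ * π' = γ⁻¹ * π * swap a b := (mul_assoc _ _ _).symm
    rw [hinv] at IH ⊢
    by_cases hζab : (γ⁻¹ * π).SameCycle a b
    · have := numCycles_add_one_le_mul_swap (Ne.symm ha) hζab
      rw [← hζ] at this
      omega
    · have hjoin : joinSetoid π' γ a b := sameCycleSetoid_inv_mul_le_joinSetoid π' γ
        (hζ ▸ (sameCycle_mul_swap_iff (Ne.symm ha)).2 hζab)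
      have h₁ := hπ'π ▸ numBlocks_le_mul_swap hjoin
      have h₂ : numCycles (γ⁻¹ * π) ≤ numCycles (γ⁻¹ * π') + 1 :=
        hζ ▸ numCycles_le_mul_swap_add_one (γ⁻¹ * π) a b
      omega

theorem numCycles_add_numCycles_inv_mul_le (π γ : Perm α) :
    numCycles π + numCycles (π⁻¹ * γ) ≤ Nat.card α + numCycles γ := by
  have := numCycles_add_numCycles_add_numCycles_le π γ
  have := numBlocks_le_numCycles π γ
  omega

theorem sameCycleSetoid_le_of_numCycles_add_numCycles_inv_mul_eq {π γ : Perm α}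
    (h : numCycles π + numCycles (π⁻¹ * γ) = Nat.card α + numCycles γ) :
    sameCycleSetoid π ≤ sameCycleSetoid γ := by
  have hblocks : numBlocks π γ = numCycles γ := by
    have := numCycles_add_numCycles_add_numCycles_le π γ
    have := numBlocks_le_numCycles π γ
    omega
  exact le_sup_left.trans (le_of_le_of_card_quotient_eq le_sup_right hblocks)

end Genus

section Restriction

theorem firstReturn_eq_apply (f : Perm α) {p : α → Prop} {x : α} (h : p (f x)) :
    firstReturn f p x = f x := by
  have h₁ : 1 ∈ {k : ℕ | 0 < k ∧ p ((f ^ k) x)} := ⟨one_pos, by rwa [pow_one]⟩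
  rw [firstReturn, le_antisymm (Nat.sInf_le h₁) (Nat.sInf_mem ⟨1, h₁⟩).1, pow_one]

theorem restrictPerm_eq_subtypePerm (f : Perm α) {p : α → Prop} (hp : ∀ x, p (f x) ↔ p x) :
    restrictPerm f p = f.subtypePerm hp := by
  have hex : ∃ e : Perm {x // p x}, ∀ x : {x // p x}, (e x : α) = firstReturn f p x :=
    ⟨f.subtypePerm hp, fun x => (firstReturn_eq_apply f ((hp x).2 x.2)).symm⟩
  rw [restrictPerm, dif_pos hex]
  exact Equiv.ext fun x => Subtype.ext <| (hex.choose_spec x).trans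
    (firstReturn_eq_apply f ((hp x).2 x.2))

theorem sameCycle_out_mk (σ : Perm α) (x : α) :
    σ.SameCycle (Quotient.mk (sameCycleSetoid σ) x).out = σ.SameCycle x := by
  have hx : σ.SameCycle (Quotient.mk (sameCycleSetoid σ) x).out x :=
    Quotient.mk_out (s := sameCycleSetoid σ) x
  exact funext fun y => propext ⟨hx.symm.trans, hx.trans⟩

variable {σ f : Perm α}

theorem sameCycle_apply_right_iff_of_forall (hf : ∀ z, σ.SameCycle z (f z)) (x y : α) :
    σ.SameCycle x (f y) ↔ σ.SameCycle x y :=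
  ⟨fun h => h.trans (hf y).symm, fun h => h.trans (hf y)⟩

theorem numCycles_restrictPerm_eq_card_fiber (hf : ∀ z, σ.SameCycle z (f z)) (x : α) :
    numCycles (restrictPerm f (σ.SameCycle x)) =
      Nat.card {u // Setoid.map_of_le (sameCycleSetoid_le_of_forall_rel f hf) u =
        Quotient.mk (sameCycleSetoid σ) x} := by
  rw [restrictPerm_eq_subtypePerm f (sameCycle_apply_right_iff_of_forall hf x)]
  refine Nat.card_eq_of_bijective
    (Quotient.lift (fun y => ⟨Quotient.mk _ y.1, Quotient.sound y.2.symm⟩)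
      fun _ _ h => Subtype.ext (Quotient.sound (Perm.sameCycle_subtypePerm.1 h))) ⟨?_, ?_⟩
  · exact fun u v => Quotient.inductionOn₂ u v fun y z h =>
      Quotient.sound (Perm.sameCycle_subtypePerm.2 (Quotient.exact (congrArg Subtype.val h)))
  · rintro ⟨u, hu⟩
    induction u using Quotient.inductionOn with
    | h y => exact ⟨Quotient.mk _ ⟨y, (Quotient.exact hu).symm⟩, rfl⟩

theorem forall_sameCycle_inv_mul_apply {π : Perm α} (hπ : ∀ z, σ.SameCycle z (π z)) (z : α) :
    σ.SameCycle z ((π⁻¹ * σ) z) :=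
  (Perm.SameCycle.refl σ z).apply_right.trans (by simpa using (hπ (π⁻¹ (σ z))).symm)

theorem restrictPerm_inv_mul {π : Perm α} (hπ : ∀ z, σ.SameCycle z (π z)) (x : α) :
    (restrictPerm π (σ.SameCycle x))⁻¹ * restrictPerm σ (σ.SameCycle x) =
      restrictPerm (π⁻¹ * σ) (σ.SameCycle x) := by
  rw [restrictPerm_eq_subtypePerm π (sameCycle_apply_right_iff_of_forall hπ x),
    restrictPerm_eq_subtypePerm σ fun y => Perm.sameCycle_apply_right,
    restrictPerm_eq_subtypePerm _
      (sameCycle_apply_right_iff_of_forall (forall_sameCycle_inv_mul_apply hπ) x)]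
  rfl

variable [Finite α] [Fintype (Quotient (sameCycleSetoid σ))]

theorem numCycles_eq_sum_numCycles_restrictPerm (hf : ∀ z, σ.SameCycle z (f z)) :
    numCycles f = ∑ c : Quotient (sameCycleSetoid σ),
      numCycles (restrictPerm f (σ.SameCycle c.out)) := by
  have hle : sameCycleSetoid f ≤ sameCycleSetoid σ := sameCycleSetoid_le_of_forall_rel f hf
  rw [numCycles, ← Nat.card_congr (Equiv.sigmaFiberEquiv (Setoid.map_of_le hle)), Nat.card_sigma]
  refine Finset.sum_congr rfl fun c _ => ?_
  rw [numCycles_restrictPerm_eq_card_fiber hf, Quotient.out_eq]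

theorem card_eq_sum_card_sameCycle :
    Nat.card α = ∑ c : Quotient (sameCycleSetoid σ), Nat.card {y // σ.SameCycle c.out y} := by
  rw [← numCycles_one, numCycles_eq_sum_numCycles_restrictPerm (f := 1) (Perm.SameCycle.refl σ)]
  refine Finset.sum_congr rfl fun c _ => ?_
  rw [restrictPerm_eq_subtypePerm 1 fun _ => Iff.rfl, Perm.subtypePerm_one, numCycles_one]

end Restriction

section Cyclewise

variable [Finite α]

theorem numCycles_restrictPerm_add_numCycles_le (π σ : Perm α) (x : α) :
    numCycles (restrictPerm π (σ.SameCycle x)) +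
        numCycles ((restrictPerm π (σ.SameCycle x))⁻¹ * restrictPerm σ (σ.SameCycle x)) ≤
      Nat.card {y // σ.SameCycle x y} + 1 := by
  have : Nonempty {y // σ.SameCycle x y} := ⟨⟨x, Perm.SameCycle.refl σ x⟩⟩
  have hcycle : numCycles (restrictPerm σ (σ.SameCycle x)) = 1 := by
    rw [restrictPerm_eq_subtypePerm σ fun y => Perm.sameCycle_apply_right]
    exact numCycles_eq_one fun y z => Perm.sameCycle_subtypePerm.2 (y.2.symm.trans z.2)
  have := numCycles_add_numCycles_inv_mul_le (restrictPerm π (σ.SameCycle x))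
    (restrictPerm σ (σ.SameCycle x))
  omega

theorem numCycles_add_numCycles_inv_mul_eq_iff {π σ : Perm α} (hπ : ∀ z, σ.SameCycle z (π z)) :
    numCycles π + numCycles (π⁻¹ * σ) = Nat.card α + numCycles σ ↔
      ∀ x, numCycles (restrictPerm π (σ.SameCycle x)) +
          numCycles ((restrictPerm π (σ.SameCycle x))⁻¹ * restrictPerm σ (σ.SameCycle x)) =
        Nat.card {y // σ.SameCycle x y} + 1 := by
  classical
  let _ : Fintype (Quotient (sameCycleSetoid σ)) := Fintype.ofFinite _
  have hlhs : numCycles π + numCycles (π⁻¹ * σ) = ∑ c : Quotient (sameCycleSetoid σ),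
      (numCycles (restrictPerm π (σ.SameCycle c.out)) + numCycles
        ((restrictPerm π (σ.SameCycle c.out))⁻¹ * restrictPerm σ (σ.SameCycle c.out))) := by
    simp only [restrictPerm_inv_mul hπ, Finset.sum_add_distrib,
      ← numCycles_eq_sum_numCycles_restrictPerm hπ,
      ← numCycles_eq_sum_numCycles_restrictPerm (forall_sameCycle_inv_mul_apply hπ)]
  have hrhs : Nat.card α + numCycles σ = ∑ c : Quotient (sameCycleSetoid σ),
      (Nat.card {y // σ.SameCycle c.out y} + 1) := by
    rw [Finset.sum_add_distrib, ← card_eq_sum_card_sameCycle]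
    simp [numCycles, Nat.card_eq_fintype_card]
  rw [hlhs, hrhs, Finset.sum_eq_sum_iff_of_le fun c _ =>
    numCycles_restrictPerm_add_numCycles_le π σ c.out]
  refine ⟨fun h x => ?_, fun h c _ => h c.out⟩
  rw [← sameCycle_out_mk σ x]
  exact h _ (Finset.mem_univ _)

theorem le'_iff_numCycles_add_numCycles_inv_mul_eq (π σ : Perm α) :
    le' π σ ↔ numCycles π + numCycles (π⁻¹ * σ) = Nat.card α + numCycles σ := by
  refine ⟨fun ⟨hle, h⟩ => ?_, fun h => ?_⟩
  · exact (numCycles_add_numCycles_inv_mul_eq_iff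
      fun z => hle z _ (Perm.SameCycle.refl π z).apply_right).2 h
  · have hle := sameCycleSetoid_le_of_numCycles_add_numCycles_inv_mul_eq h
    exact ⟨fun x y => @hle x y, (numCycles_add_numCycles_inv_mul_eq_iff
      fun z => hle (Perm.SameCycle.refl π z).apply_right).1 h⟩

theorem len_add_len_inv_mul_eq_iff (π σ : Perm α) :
    len π + len (π⁻¹ * σ) = len σ ↔
      numCycles π + numCycles (π⁻¹ * σ) = Nat.card α + numCycles σ := by
  have := numCycles_le_card π
  have := numCycles_le_card (π⁻¹ * σ)
  have := numCycles_le_card σ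
  unfold len
  omega

end Cyclewise

/-- `π ≤ σ` iff `|π| + |π⁻¹σ| = |σ|`. -/
theorem stmt1 {n : ℕ} (π σ : Equiv.Perm (Fin n)) :
    le' π σ ↔ len π + len (π⁻¹ * σ) = len σ := by
  rw [le'_iff_numCycles_add_numCycles_inv_mul_eq, len_add_len_inv_mul_eq_iff]

end ThirdOrderFree
end

section
/- Fix positive integers n₁,…,n_{r+s+t} and let n = Σnᵢ, N = {n₁, n₁+n₂, …, n}. Let γ ∈ S_n be the product of r+s+t consecutive cycles T_i of lengths n_i, and for π ∈ S_{r+s+t} let π_⃗n ∈ S_n be defined by π_⃗n(i) = γ(i) if i ∉ N, and π_⃗n(n₁+⋯+n_j) = n₁+⋯+n_{π(j)−1}+1. Let ψ : [r+s+t] → [n], ψ(i) = n₁+⋯+n_i. Then: (1) ψ ∘ (π⁻¹γ_{r,s,t}) = (π_⃗n⁻¹ γ_{p,q,l}) ∘ ψ; (2) #(π) = #(π_⃗n) and #(π⁻¹γ_{r,s,t}) + (p+q+l) = #(π_⃗n⁻¹γ_{p,q,l}) + (r+s+t); (3) if π ∈ S_NC(r,s,t) then π_⃗n ∈ S_NC(p,q,l),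 where p = n₁+⋯+n_r, q = n_{r+1}+⋯+n_{r+s}, l = n_{r+s+1}+⋯+n_{r+s+t}. -/
open Equiv

namespace ThirdOrderFree

variable {α : Type*}

/-! `π_{\vec n}` is `π`, extended to the first points of the blocks, composed with the rotation
`γ` of the blocks. Its cycles are exactly the preimages of the cycles of `π` under the map sending
a point to its block, so `#(π) = #(π_{\vec n})`, and the same holds for the join with
`γ_{p,q,l} = (γ_{r,s,t})_{\vec n}`. Moreover `π_{\vec n}⁻¹ σ_{\vec n}` is conjugate by `γ` to the
extension of `π⁻¹σ` by fixed points, which gives the equivariance of `ψ` and the count of cycles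
of `π⁻¹σ`; together these turn the genus equation for `π` into the one for `π_{\vec n}`. -/

section NumCycles

variable {α β : Type*}

theorem mk_sameCycleSetoid_eq_iff {σ : Perm α} {x y : α} :
    Quotient.mk (sameCycleSetoid σ) x = Quotient.mk _ y ↔ σ.SameCycle x y :=
  Quotient.eq (r := sameCycleSetoid σ)

theorem numCycles_eq_card_of_sameCycle_iff {σ : Perm α} (q : α → β)
    (hq : Function.Surjective q) (h : ∀ x y, σ.SameCycle x y ↔ q x = q y) : numCycles σ = Nat.card β := by
  have hker : sameCycleSetoid σ = Setoid.ker q := Setoid.ext h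
  rw [numCycles, hker]
  exact Nat.card_congr (Setoid.quotientKerEquivOfSurjective q hq)

theorem numCycles_conj (g σ : Perm α) : numCycles (g⁻¹ * σ * g) = numCycles σ :=
  numCycles_eq_card_of_sameCycle_iff (fun x => Quotient.mk (sameCycleSetoid σ) (g x))
    (Quotient.mk_surjective.comp g.surjective) fun x y => by
      simpa using (Perm.sameCycle_conj (g := g⁻¹) (f := σ) (x := x) (y := y)).trans
        mk_sameCycleSetoid_eq_iff.symm

theorem sameCycle_extendDomain_iff_eq_of_not {p : β → Prop} [DecidablePred p]
    {f : α ≃ Subtype p} {e : Perm α} {x y : β} (hx : ¬ p x) : (e.extendDomain f).SameCycle x y ↔ x = y := by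
  refine ⟨fun ⟨k, hk⟩ => ?_, fun h => h ▸ Perm.SameCycle.refl _ x⟩
  rwa [← Perm.extendDomain_zpow, Perm.extendDomain_apply_not_subtype _ _ hx] at hk

theorem numCycles_extendDomain [Finite α] [Finite β] {p : β → Prop} [DecidablePred p]
    (f : α ≃ Subtype p) (e : Perm α) :
    numCycles (e.extendDomain f) + Nat.card α = numCycles e + Nat.card β := by
  let q : β → Quotient (sameCycleSetoid e) ⊕ {x // ¬ p x} := fun x =>
    if h : p x then .inl (Quotient.mk _ (f.symm ⟨x, h⟩)) else .inr ⟨x, h⟩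
  have hq : Function.Surjective q := by
    rintro (c | ⟨x, hx⟩)
    · induction c using Quotient.ind with | _ a => exact ⟨f a, by simp [q, (f a).2]⟩
    · exact ⟨x, by simp [q, hx]⟩
  have hcycle : ∀ x y, (e.extendDomain f).SameCycle x y ↔ q x = q y := by
    intro x y
    by_cases hx : p x <;> by_cases hy : p y
    · obtain ⟨a, rfl⟩ : ∃ a, (f a : β) = x := ⟨f.symm ⟨x, hx⟩, by simp⟩
      obtain ⟨b, rfl⟩ : ∃ b, (f b : β) = y := ⟨f.symm ⟨y, hy⟩, by simp⟩
      simp [q, (f a).2, (f b).2, mk_sameCycleSetoid_eq_iff]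
    · have hxy : ¬ (e.extendDomain f).SameCycle x y := fun hxy =>
        hy ((sameCycle_extendDomain_iff_eq_of_not hy).1 hxy.symm ▸ hx)
      simp [q, hx, hy, hxy]
    · simp [q, hx, hy, sameCycle_extendDomain_iff_eq_of_not hx]
      rintro rfl
      exact hx hy
    · simp [q, hx, hy, sameCycle_extendDomain_iff_eq_of_not hx]
  have hβ : Nat.card β = Nat.card α + Nat.card {x // ¬ p x} := by
    rw [← Nat.card_congr (Equiv.sumCompl p), Nat.card_sum, Nat.card_congr f.symm]
  rw [numCycles_eq_card_of_sameCycle_iff q hq hcycle, Nat.card_sum, hβ, numCycles]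
  ring

theorem sameCycle_map_of_sameCycle_map_apply {σ : Perm α} {τ : Perm β} {f : α → β}
    (hf : ∀ x, τ.SameCycle (f x) (f (σ x))) {x y : α} (h : σ.SameCycle x y) :
    τ.SameCycle (f x) (f y) := by
  obtain ⟨k, rfl⟩ := h
  induction k using Int.induction_on with
  | zero => rfl
  | succ k ih => rw [add_comm, zpow_one_add, Perm.mul_apply]; exact ih.trans (hf _)
  | pred k ih =>
    rw [sub_eq_neg_add, zpow_add, zpow_neg_one, Perm.mul_apply]
    exact ih.trans (by simpa using (hf (σ⁻¹ ((σ ^ (-(k : ℤ))) x))).symm)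

end NumCycles

theorem finRotate_apply_of_lt {m : ℕ} {j : Fin m} (h : (j : ℕ) + 1 < m) :
    finRotate m j = ⟨j + 1, h⟩ := by
  obtain ⟨m, rfl⟩ : ∃ k, m = k + 1 := ⟨m - 1, by omega⟩
  exact finRotate_of_lt (k := j) (by omega)

theorem finRotate_apply_of_eq {m : ℕ} {j : Fin m} (h : (j : ℕ) = m - 1) :
    finRotate m j = ⟨0, by omega⟩ := by
  obtain ⟨m, rfl⟩ : ∃ k, m = k + 1 := ⟨m - 1, by omega⟩
  obtain ⟨j, hj⟩ := j
  obtain rfl : j = m := by simpa using h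
  exact finRotate_last'

section MergePerm

variable {ι : Type*} (n : ι → ℕ) (hn : ∀ i, 0 < n i)

theorem mergePerm_apply_of_lt (π : Perm ι) {i : ι} {j : Fin (n i)} (h : (j : ℕ) + 1 < n i) :
    mergePerm n hn π ⟨i, j⟩ = ⟨i, ⟨j + 1, h⟩⟩ := by
  rw [mergePerm, Perm.mul_apply, blockRotate, sigmaCongrRight_apply, finRotate_apply_of_lt h]
  exact Perm.extendDomain_apply_not_subtype _ _ (by simp)

theorem mergePerm_apply_last (π : Perm ι) (i : ι) :
    mergePerm n hn π ⟨i, ⟨n i - 1, Nat.sub_lt (hn i) Nat.one_pos⟩⟩ = ⟨π i, ⟨0, hn (π i)⟩⟩ := by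
  rw [mergePerm, Perm.mul_apply, blockRotate, sigmaCongrRight_apply, finRotate_apply_of_eq rfl]
  exact Perm.extendDomain_apply_image π (zeroSection n hn) i

theorem mergePerm_pow_apply_zero (π : Perm ι) (i : ι) (k : ℕ) (h : k < n i) :
    (mergePerm n hn π ^ k) ⟨i, ⟨0, hn i⟩⟩ = ⟨i, ⟨k, h⟩⟩ := by
  induction k with
  | zero => rfl
  | succ k ih => rw [pow_succ', Perm.mul_apply, ih (by omega), mergePerm_apply_of_lt]

theorem sameCycle_mergePerm_zero (π : Perm ι) (i : ι) (j : Fin (n i)) :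
    (mergePerm n hn π).SameCycle ⟨i, ⟨0, hn i⟩⟩ ⟨i, j⟩ :=
  ⟨j, by rw [zpow_natCast, mergePerm_pow_apply_zero n hn π i j j.isLt]⟩

theorem sameCycle_mergePerm_iff (π : Perm ι) {x y : (i : ι) × Fin (n i)} :
    (mergePerm n hn π).SameCycle x y ↔ π.SameCycle x.1 y.1 := by
  constructor
  · refine sameCycle_map_of_sameCycle_map_apply (f := Sigma.fst) fun ⟨i, j⟩ => ?_
    by_cases h : (j : ℕ) + 1 < n i
    · rw [mergePerm_apply_of_lt n hn π h]
    · obtain rfl : j = ⟨n i - 1, Nat.sub_lt (hn i) Nat.one_pos⟩ :=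
        Fin.ext (show (j : ℕ) = n i - 1 by omega)
      rw [mergePerm_apply_last]
      exact Perm.sameCycle_apply_right.2 (.refl _ _)
  · intro h
    have hzero : (mergePerm n hn π).SameCycle ⟨x.1, ⟨0, hn _⟩⟩ ⟨y.1, ⟨0, hn _⟩⟩ := by
      refine sameCycle_map_of_sameCycle_map_apply (τ := mergePerm n hn π)
        (f := fun i => ⟨i, ⟨0, hn i⟩⟩) (fun i => ?_) h
      refine (sameCycle_mergePerm_zero n hn π i ⟨n i - 1, Nat.sub_lt (hn i) Nat.one_pos⟩).trans
        ⟨1, ?_⟩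
      rw [zpow_one, mergePerm_apply_last]
    exact (sameCycle_mergePerm_zero n hn π _ _).symm.trans
      (hzero.trans (sameCycle_mergePerm_zero n hn π _ _))

theorem numCycles_mergePerm (π : Perm ι) : numCycles (mergePerm n hn π) = numCycles π :=
  numCycles_eq_card_of_sameCycle_iff (fun x => Quotient.mk (sameCycleSetoid π) x.1)
    (Quotient.mk_surjective.comp fun i => ⟨⟨i, ⟨0, hn i⟩⟩, rfl⟩)
    fun _ _ => (sameCycle_mergePerm_iff n hn π).trans mk_sameCycleSetoid_eq_iff.symm

theorem mergePerm_inv_mul (π σ : Perm ι) :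
    (mergePerm n hn π)⁻¹ * mergePerm n hn σ =
      (blockRotate n)⁻¹ * (π⁻¹ * σ).extendDomain (zeroSection n hn) * blockRotate n := by
  simp only [mergePerm, mul_inv_rev, Perm.extendDomain_inv, mul_assoc]
  rw [← mul_assoc (π⁻¹.extendDomain _), Perm.extendDomain_mul]

theorem mergePerm_inv_mul_apply_last (π σ : Perm ι) (i : ι) :
    ((mergePerm n hn π)⁻¹ * mergePerm n hn σ) ⟨i, ⟨n i - 1, Nat.sub_lt (hn i) Nat.one_pos⟩⟩ =
      ⟨(π⁻¹ * σ) i, ⟨n _ - 1, Nat.sub_lt (hn _) Nat.one_pos⟩⟩ := by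
  rw [Perm.mul_apply, Perm.inv_eq_iff_eq, mergePerm_apply_last, mergePerm_apply_last,
    Perm.mul_apply, ← Perm.mul_apply π, mul_inv_cancel, Perm.one_apply]

theorem numCycles_mergePerm_inv_mul [Finite ι] (π σ : Perm ι) :
    numCycles ((mergePerm n hn π)⁻¹ * mergePerm n hn σ) + Nat.card ι =
      numCycles (π⁻¹ * σ) + Nat.card ((i : ι) × Fin (n i)) := by
  rw [mergePerm_inv_mul, numCycles_conj]
  exact numCycles_extendDomain (zeroSection n hn) (π⁻¹ * σ)

theorem joinSetoid_mergePerm {π σ : Perm ι} {x y : (i : ι) × Fin (n i)}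
    (h : (joinSetoid π σ).r x.1 y.1) :
    (joinSetoid (mergePerm n hn π) (mergePerm n hn σ)).r x y := by
  set J := joinSetoid (mergePerm n hn π) (mergePerm n hn σ)
  have hπ : ∀ {a b}, (mergePerm n hn π).SameCycle a b → J.r a b := fun hab =>
    le_sup_left (a := sameCycleSetoid _) hab
  have hσ : ∀ {a b}, (mergePerm n hn σ).SameCycle a b → J.r a b := fun hab =>
    le_sup_right (b := sameCycleSetoid _) hab
  have hzero : joinSetoid π σ ≤ Setoid.comap (fun i => ⟨i, ⟨0, hn i⟩⟩) J :=
    sup_le (fun _ _ hij => hπ ((sameCycle_mergePerm_iff n hn π).2 hij))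
      (fun _ _ hij => hσ ((sameCycle_mergePerm_iff n hn σ).2 hij))
  exact J.trans' (J.symm' (hπ (sameCycle_mergePerm_zero n hn π _ _)))
    (J.trans' (hzero h) (hπ (sameCycle_mergePerm_zero n hn π _ _)))

theorem SNC.mergePerm [Finite ι] {γ π : Perm ι} (h : SNC γ π) :
    SNC (mergePerm n hn γ) (mergePerm n hn π) := by
  obtain ⟨hjoin, hgenus⟩ := h
  refine ⟨fun x y => joinSetoid_mergePerm n hn (hjoin x.1 y.1), ?_⟩
  have := numCycles_mergePerm_inv_mul n hn π γ
  rw [numCycles_mergePerm, numCycles_mergePerm]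
  omega

end MergePerm

/-- `[r+s+t]` is encoded as `Σ i : Fin 3, Fin (![r, s, t] i)`, `π_{\vec n}` as `mergePerm n hn π`
and `γ_{p,q,l}` as `mergePerm n hn γrst`; `ψ x = n₁ + ⋯ + n_x` is the last point of the block
`T x`. -/
theorem stmt11_general (r s t : ℕ) (n : ((i : Fin 3) × Fin (![r, s, t] i)) → ℕ)
    (hn : ∀ x, 0 < n x)
    (γrst : Equiv.Perm ((i : Fin 3) × Fin (![r, s, t] i)))
    (ψ : ((i : Fin 3) × Fin (![r, s, t] i)) →
      ((x : (i : Fin 3) × Fin (![r, s, t] i)) × Fin (n x)))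
    (hψ : ∀ x, ψ x = ⟨x, ⟨n x - 1, Nat.sub_lt (hn x) Nat.one_pos⟩⟩)
    (π : Equiv.Perm ((i : Fin 3) × Fin (![r, s, t] i))) :
    (∀ x, ψ ((π⁻¹ * γrst) x) = ((mergePerm n hn π)⁻¹ * mergePerm n hn γrst) (ψ x)) ∧
    numCycles π = numCycles (mergePerm n hn π) ∧
    numCycles (π⁻¹ * γrst) +
        Nat.card ((x : (i : Fin 3) × Fin (![r, s, t] i)) × Fin (n x)) =
      numCycles ((mergePerm n hn π)⁻¹ * mergePerm n hn γrst) +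
        Nat.card ((i : Fin 3) × Fin (![r, s, t] i)) ∧
    (SNC γrst π → SNC (mergePerm n hn γrst) (mergePerm n hn π)) :=
  ⟨fun x => by rw [hψ, hψ, mergePerm_inv_mul_apply_last],
    (numCycles_mergePerm n hn π).symm,
    (numCycles_mergePerm_inv_mul n hn π γrst).symm,
    SNC.mergePerm n hn⟩

/-- basic properties of `π ↦ π_{\vec n}`. Here `W` encodes
`[r+s+t]` (three groups of sizes `r, s, t`), `γ_{r,s,t} = blockRotate ![r,s,t]`,
`γ = blockRotate n` has the cycles `T i`, `π_{\vec n} = mergePerm n hn π`, and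
`γ_{p,q,l} = mergePerm n hn γ_{r,s,t}`; `ψ i = n₁ + ⋯ + n_i` is the last element
of the block `T i`. -/
theorem stmt11 (r s t : ℕ) (n : ((i : Fin 3) × Fin (![r, s, t] i)) → ℕ)
    (hn : ∀ x, 0 < n x)
    (γrst : Equiv.Perm ((i : Fin 3) × Fin (![r, s, t] i)))
    (hγrst : γrst = blockRotate ![r, s, t])
    (ψ : ((i : Fin 3) × Fin (![r, s, t] i)) →
      ((x : (i : Fin 3) × Fin (![r, s, t] i)) × Fin (n x)))
    (hψ : ∀ x, ψ x = ⟨x, ⟨n x - 1, Nat.sub_lt (hn x) Nat.one_pos⟩⟩)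
    (π : Equiv.Perm ((i : Fin 3) × Fin (![r, s, t] i))) :
    (∀ x, ψ ((π⁻¹ * γrst) x) = ((mergePerm n hn π)⁻¹ * mergePerm n hn γrst) (ψ x)) ∧
    numCycles π = numCycles (mergePerm n hn π) ∧
    numCycles (π⁻¹ * γrst) +
        Nat.card ((x : (i : Fin 3) × Fin (![r, s, t] i)) × Fin (n x)) =
      numCycles ((mergePerm n hn π)⁻¹ * mergePerm n hn γrst) +
        Nat.card ((i : Fin 3) × Fin (![r, s, t] i)) ∧
    (SNC γrst π → SNC (mergePerm n hn γrst) (mergePerm n hn π)) :=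
  stmt11_general r s t n hn γrst ψ hψ π

end ThirdOrderFree
end

section
/- Let n = 2r₁ + ⋯ + 2r_m, γ = γ_{2r₁,…,2r_m} ∈ S_n the product of m consecutive directed cycles of lengths 2rᵢ, and O = {1, 3, …, n−1} the set of odd numbers in [n]. Suppose π ∈ S_n is parity reversing, i.e. π(k) and k have opposite parity for all k. Then γπ⁻¹ separates the points of O if and only if π(2k) = γ(2k) for every k with 2k ≤ n. -/
open Equiv

namespace ThirdOrderFree

variable {α : Type*}

namespace Separates

variable {τ : Perm α} {N : Set α}

theorem apply_eq_of_mem (h : Separates τ N) {x : α} (hx : x ∈ N) (hτx : τ x ∈ N) :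
    τ x = x :=
  h _ hτx _ hx (Perm.SameCycle.refl τ x).apply_left

theorem of_forall_apply_eq (h : ∀ x ∈ N, τ x = x) : Separates τ N :=
  fun x hx _ _ hxy => hxy.eq_of_left (h x hx)

end Separates

/- `γπ⁻¹` sends `π x` to `γ x`, both in `p` when `x ∉ p`, so separation forces them to be equal;
conversely, agreement off `p` makes `γπ⁻¹` fix `p` pointwise, since `π⁻¹` maps `p` off `p`. -/
theorem separates_mul_inv_iff {p : α → Prop} {γ π : Perm α} (hπ : ∀ x, p (π x) ↔ ¬ p x)
    (hγ : ∀ x, ¬ p x → p (γ x)) :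
    Separates (γ * π⁻¹) {x | p x} ↔ ∀ x, ¬ p x → π x = γ x := by
  constructor
  · intro hsep x hx
    have hγπ : (γ * π⁻¹) (π x) = γ x := by simp
    rw [← hγπ]
    exact (hsep.apply_eq_of_mem ((hπ x).mpr hx) (hγπ ▸ hγ x hx)).symm
  · refine fun h => Separates.of_forall_apply_eq fun z hz => ?_
    have hπz : ¬ p (π⁻¹ z) := (hπ _).mp (by simpa using hz)
    rw [Perm.mul_apply, ← h _ hπz]
    exact π.apply_symm_apply z

theorem finRotate_val_mod_two_ne {n : ℕ} (hn : Even n) (j : Fin n) :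
    (finRotate n j : ℕ) % 2 ≠ (j : ℕ) % 2 := by
  cases n with
  | zero => exact j.elim0
  | succ k =>
    rw [coe_finRotate]
    split_ifs with hj
    · subst hj
      rw [Fin.val_last]
      grind
    · omega

theorem blockRotate_val_mod_two_ne {ι : Type*} {n : ι → ℕ} (hn : ∀ i, Even (n i))
    (x : (i : ι) × Fin (n i)) : ((blockRotate n x).2 : ℕ) % 2 ≠ (x.2 : ℕ) % 2 :=
  finRotate_val_mod_two_ne (hn x.1) x.2

/- Position `j` of block `i` stands for the number `j + 1` plus an even offset, so the odd
numbers `O` are the positions with `j` even. -/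
/-- for a parity-reversing `π`, `γπ⁻¹` separates the odd positions `O`
iff `π(2k) = γ(2k)` for all even positions `2k`. (Global position within each block of
even length `2 rᵢ` is `j + 1` plus an even offset, so odd positions are those with
`j` even, and even positions those with `j` odd.) -/
theorem stmt13 (m : ℕ) (r : Fin m → ℕ)
    (γ : Equiv.Perm ((i : Fin m) × Fin (2 * r i)))
    (hγ : γ = blockRotate (fun i => 2 * r i))
    (π : Equiv.Perm ((i : Fin m) × Fin (2 * r i)))
    (hpar : ∀ x, (π x).2.val % 2 ≠ x.2.val % 2) :
    Separates (γ * π⁻¹) {x | x.2.val % 2 = 0} ↔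
      ∀ x : (i : Fin m) × Fin (2 * r i), x.2.val % 2 = 1 → π x = γ x := by
  subst hγ
  have hπ : ∀ x, (π x).2.val % 2 = 0 ↔ ¬ x.2.val % 2 = 0 := fun x => by
    have := hpar x
    omega
  have hγ : ∀ x, ¬ x.2.val % 2 = 0 → (blockRotate (fun i => 2 * r i) x).2.val % 2 = 0 :=
    fun x hx => by
      have := blockRotate_val_mod_two_ne (fun i => even_two_mul (r i)) x
      omega
  simp only [separates_mul_inv_iff hπ hγ, Nat.mod_two_ne_zero]

end ThirdOrderFree
end
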